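/- The explicit (●,■) qudit Floquet code checks satisfy the three code conditions: let D be a prime number with D ≥ 3, and define the two-qudit check operators G := X^(−2) ⊗ₖ X^(−2), R := (X*Z) ⊗ₖ (X*Z^(−1)), and B := (X*Z^(−1)) ⊗ₖ (X*Z) (integer powers via invertibility of X and Z). Then: (i) G, R, B pairwise commute; (ii) the single-qudit Paulis X^(−2), X*Z, and X*Z^(−1) pairwise do NOT commute; and (iii) the ordered product of the single-qudit green, red, blue Paulis over an edge equals the identity, (X^(−2) * (X*Z) * (X*Z^(−1))) ⊗ₖ (X^(−2) * (X*Z^(−1)) * (X*Z)) = 1. -/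

import Mathlib

/-! The clock and shift matrices satisfy `Z * X = ω • (X * Z)`, so the Weyl operators
`W(a, b) = X ^ a * Z ^ b` obey `W(a, b) * W(a', b') = ω ^ (b * a' - a * b') • W(a', b') * W(a, b)`.
The green, red and blue Paulis are `W(-2, 0)`, `W(1, 1)` and `W(1, -1)`; their pairwise
symplectic products are `±2`, and `ω ^ 2 ≠ 1` because `D ≥ 3`, so they do not commute. On the two
qudits of a check the phases are `ω ^ 2` and `ω ^ (-2)`, which cancel in the Kronecker product.
The ordered products `W(-2, 0) * W(1, 1) * W(1, -1)` and `W(-2, 0) * W(1, -1) * W(1, 1)` have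
total exponent zero, hence are the scalars `ω` and `ω⁻¹`. -/

noncomputable def omg (D : ℕ) : ℂ := Complex.exp (2 * Real.pi * Complex.I / D)

noncomputable def Xmat (D : ℕ) : Matrix (Fin D) (Fin D) ℂ :=
  Matrix.of fun i j => if (i : ZMod D) = (j : ZMod D) + 1 then 1 else 0

noncomputable def Zmat (D : ℕ) : Matrix (Fin D) (Fin D) ℂ :=
  Matrix.of fun i j => if i = j then (omg D) ^ (i : ℕ) else 0

open Kronecker

def weylOp {M : Type*} [DivInvMonoid M] (x z : M) (a b : ℤ) : M := x ^ a * z ^ b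

section TwistedCommutation
variable {G : Type*} [Group G] {x z c : G}

theorem zpow_mul_zpow_of_mul_eq (hcx : Commute c x) (hcz : Commute c z)
    (h : z * x = c * (x * z)) (a b : ℤ) : z ^ b * x ^ a = c ^ (a * b) * (x ^ a * z ^ b) := by
  have hzx : SemiconjBy z (x ^ a) (c ^ a * x ^ a) := by
    rw [← hcx.mul_zpow]
    exact SemiconjBy.zpow_right (by rw [SemiconjBy, h, mul_assoc]) a
  have hxz : SemiconjBy (x ^ a) z (c ^ (-a) * z) := by
    rw [SemiconjBy, mul_assoc, hzx.eq, ← mul_assoc, ← mul_assoc, ← zpow_add, neg_add_cancel,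
      zpow_zero, one_mul]
  have hxz_pow := (hxz.zpow_right b).eq
  rw [(hcz.zpow_left _).mul_zpow, ← zpow_mul] at hxz_pow
  rw [hxz_pow, mul_assoc, ← mul_assoc, ← zpow_add]
  simp

theorem weylOp_mul_weylOp (hcx : Commute c x) (hcz : Commute c z) (h : z * x = c * (x * z))
    (a b a' b' : ℤ) :
    weylOp x z a b * weylOp x z a' b' = c ^ (a' * b) * weylOp x z (a + a') (b + b') := by
  simp only [weylOp]
  rw [mul_assoc, ← mul_assoc (z ^ b), zpow_mul_zpow_of_mul_eq hcx hcz h, zpow_add, zpow_add,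
    mul_assoc (c ^ _), ← mul_assoc (x ^ a), ← (hcx.zpow_zpow _ _).eq]
  simp only [mul_assoc]

end TwistedCommutation

namespace Matrix

theorem commute_kronecker_of_mul_eq_smul {l m R : Type*} [Fintype l] [Fintype m]
    [CommSemiring R] {A A' : Matrix l l R} {B B' : Matrix m m R} {s : R}
    (hA : A * A' = s • (A' * A)) (hB : B' * B = s • (B * B')) :
    Commute (A ⊗ₖ B) (A' ⊗ₖ B') := by
  rw [commute_iff_eq, ← mul_kronecker_mul, ← mul_kronecker_mul, hA, hB, smul_kronecker,
    kronecker_smul]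

variable {n : Type*} [Fintype n] [DecidableEq n]

theorem isUnit_weylOp {R : Type*} [CommRing R] {X Z : Matrix n n R} (hX : IsUnit X)
    (hZ : IsUnit Z) (a b : ℤ) : IsUnit (weylOp X Z a b) := by
  simpa [weylOp, coe_units_zpow] using (hX.unit ^ a * hZ.unit ^ b).isUnit

variable {K : Type*} [Field K] {X Z : Matrix n n K} {ω : K}

theorem weylOp_mul_weylOp (hX : IsUnit X) (hZ : IsUnit Z) (hω : ω ≠ 0)
    (h : Z * X = ω • (X * Z)) (a b a' b' : ℤ) :
    weylOp X Z a b * weylOp X Z a' b' = ω ^ (a' * b) • weylOp X Z (a + a') (b + b') := by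
  obtain ⟨x, rfl⟩ := hX
  obtain ⟨z, rfl⟩ := hZ
  let c : (Matrix n n K)ˣ :=
    Units.map (algebraMap K (Matrix n n K) : K →* Matrix n n K) (Units.mk0 ω hω)
  have hc (k : ℤ) : ((c ^ k : (Matrix n n K)ˣ) : Matrix n n K) = algebraMap K _ (ω ^ k) := by
    rw [← map_zpow, Units.coe_map, Units.val_zpow_eq_zpow_val, Units.val_mk0]
    rfl
  have hcx : Commute c x := Units.ext (Algebra.commutes ω (x : Matrix n n K))
  have hcz : Commute c z := Units.ext (Algebra.commutes ω (z : Matrix n n K))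
  have hzx : z * x = c * (x * z) := Units.ext (by simpa [c, Algebra.smul_def] using h)
  have key := congrArg Units.val (_root_.weylOp_mul_weylOp hcx hcz hzx a b a' b')
  simpa [weylOp, coe_units_zpow, Algebra.smul_def, hc] using key

theorem weylOp_mul_comm (hX : IsUnit X) (hZ : IsUnit Z) (hω : ω ≠ 0)
    (h : Z * X = ω • (X * Z)) (a b a' b' : ℤ) :
    weylOp X Z a b * weylOp X Z a' b' =
      ω ^ (b * a' - a * b') • (weylOp X Z a' b' * weylOp X Z a b) := by
  rw [weylOp_mul_weylOp hX hZ hω h, weylOp_mul_weylOp hX hZ hω h, smul_smul, ← zpow_add₀ hω,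
    add_comm a', add_comm b']
  ring_nf

theorem commute_weylOp_iff [Nonempty n] (hX : IsUnit X) (hZ : IsUnit Z) (hω : ω ≠ 0)
    (h : Z * X = ω • (X * Z)) (a b a' b' : ℤ) :
    Commute (weylOp X Z a b) (weylOp X Z a' b') ↔ ω ^ (b * a' - a * b') = 1 := by
  have hne : weylOp X Z a' b' * weylOp X Z a b ≠ 0 :=
    ((isUnit_weylOp hX hZ _ _).mul (isUnit_weylOp hX hZ _ _)).ne_zero
  rw [commute_iff_eq, weylOp_mul_comm hX hZ hω h]
  refine ⟨fun hcomm => smul_left_injective K hne ?_, fun hpow => by rw [hpow, one_smul]⟩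
  simpa only [one_smul] using hcomm

theorem weylOp_mul_weylOp_mul_weylOp_of_add_eq_zero (hX : IsUnit X) (hZ : IsUnit Z)
    (hω : ω ≠ 0) (h : Z * X = ω • (X * Z)) (a b a' b' a'' b'' : ℤ)
    (ha : a + a' + a'' = 0) (hb : b + b' + b'' = 0) :
    weylOp X Z a b * weylOp X Z a' b' * weylOp X Z a'' b'' =
      ω ^ (a' * b + a'' * (b + b')) • 1 := by
  rw [weylOp_mul_weylOp hX hZ hω h, smul_mul_assoc, weylOp_mul_weylOp hX hZ hω h, smul_smul,
    ← zpow_add₀ hω, ha, hb]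
  simp [weylOp]

end Matrix

section ClockAndShift
variable {D : ℕ}

theorem Zmat_eq_diagonal : Zmat D = Matrix.diagonal fun i : Fin D => omg D ^ (i : ℕ) := rfl

variable [NeZero D]

theorem Fin.natCast_eq_natCast_add_one_iff (i j : Fin D) :
    ((i : ℕ) : ZMod D) = (j : ℕ) + 1 ↔ i = j + 1 := by
  rw [Fin.ext_iff, Fin.val_add, Fin.val_one', Nat.add_mod_mod, ← Nat.cast_add_one,
    ZMod.natCast_eq_natCast_iff', Nat.mod_eq_of_lt i.isLt]

theorem isPrimitiveRoot_omg : IsPrimitiveRoot (omg D) D :=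
  Complex.isPrimitiveRoot_exp D (NeZero.ne D)

theorem Xmat_eq_permMatrix :
    Xmat D = Equiv.Perm.permMatrix ℂ (Equiv.subRight (1 : Fin D)) := by
  ext i j
  simp [Xmat, Fin.natCast_eq_natCast_add_one_iff, PEquiv.toMatrix_apply, sub_eq_iff_eq_add]

theorem isUnit_Xmat : IsUnit (Xmat D) := by
  rw [Xmat_eq_permMatrix, Matrix.isUnit_iff_isUnit_det, Matrix.det_permutation]
  exact (Equiv.Perm.sign _).isUnit.map (Int.castRingHom ℂ)

theorem isUnit_Zmat : IsUnit (Zmat D) := by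
  rw [Zmat_eq_diagonal, Matrix.isUnit_diagonal, Pi.isUnit_iff]
  exact fun i => (isPrimitiveRoot_omg.isUnit (NeZero.ne D)).pow _

theorem omg_pow_val_add_one (j : Fin D) :
    omg D ^ ((j + 1 : Fin D) : ℕ) = omg D * omg D ^ (j : ℕ) := by
  rw [Fin.val_add, Fin.val_one', Nat.add_mod_mod,
    ← pow_eq_pow_mod _ isPrimitiveRoot_omg.pow_eq_one, pow_succ']

theorem Zmat_mul_Xmat : Zmat D * Xmat D = omg D • (Xmat D * Zmat D) := by
  ext i j
  rw [Zmat_eq_diagonal, Matrix.diagonal_mul, Matrix.smul_apply, Matrix.mul_diagonal]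
  by_cases h : i = j + 1
  · simp [Xmat, Fin.natCast_eq_natCast_add_one_iff, h, omg_pow_val_add_one]
  · simp [Xmat, Fin.natCast_eq_natCast_add_one_iff, h]

end ClockAndShift

theorem circle_square_code_conditions_general (D : ℕ) (hD3 : 3 ≤ D)
    (G : Matrix (Fin D × Fin D) (Fin D × Fin D) ℂ)
    (hG : G = (Xmat D ^ (-2 : ℤ)) ⊗ₖ (Xmat D ^ (-2 : ℤ)))
    (R : Matrix (Fin D × Fin D) (Fin D × Fin D) ℂ)
    (hR : R = (Xmat D * Zmat D) ⊗ₖ (Xmat D * Zmat D ^ (-1 : ℤ)))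
    (B : Matrix (Fin D × Fin D) (Fin D × Fin D) ℂ)
    (hB : B = (Xmat D * Zmat D ^ (-1 : ℤ)) ⊗ₖ (Xmat D * Zmat D)) :
    (Commute G R ∧ Commute G B ∧ Commute R B) ∧
    (¬ Commute (Xmat D ^ (-2 : ℤ)) (Xmat D * Zmat D) ∧
     ¬ Commute (Xmat D ^ (-2 : ℤ)) (Xmat D * Zmat D ^ (-1 : ℤ)) ∧
     ¬ Commute (Xmat D * Zmat D) (Xmat D * Zmat D ^ (-1 : ℤ))) ∧
    (Xmat D ^ (-2 : ℤ) * (Xmat D * Zmat D) * (Xmat D * Zmat D ^ (-1 : ℤ)))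
      ⊗ₖ (Xmat D ^ (-2 : ℤ) * (Xmat D * Zmat D ^ (-1 : ℤ)) * (Xmat D * Zmat D)) = 1 := by
  have : NeZero D := ⟨by omega⟩
  have hω : omg D ≠ 0 := isPrimitiveRoot_omg.ne_zero (NeZero.ne D)
  have hω2 : omg D ^ 2 ≠ 1 := isPrimitiveRoot_omg.pow_ne_one_of_pos_of_lt two_ne_zero (by omega)
  have hcomm := Matrix.weylOp_mul_comm isUnit_Xmat isUnit_Zmat hω Zmat_mul_Xmat
  have hcommute := Matrix.commute_weylOp_iff isUnit_Xmat isUnit_Zmat hω Zmat_mul_Xmat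
  have hproduct := Matrix.weylOp_mul_weylOp_mul_weylOp_of_add_eq_zero isUnit_Xmat isUnit_Zmat
    hω Zmat_mul_Xmat
  have hP : Xmat D ^ (-2 : ℤ) = weylOp (Xmat D) (Zmat D) (-2) 0 := by simp [weylOp]
  have hS : Xmat D * Zmat D = weylOp (Xmat D) (Zmat D) 1 1 := by simp [weylOp]
  have hT : Xmat D * Zmat D ^ (-1 : ℤ) = weylOp (Xmat D) (Zmat D) 1 (-1) := by simp [weylOp]
  subst hG hR hB
  rw [hP, hS, hT]
  have hPS := hcomm (-2) 0 1 1
  have hTP := hcomm 1 (-1) (-2) 0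
  have hST := hcomm 1 1 1 (-1)
  norm_num at hPS hTP hST
  refine ⟨⟨Matrix.commute_kronecker_of_mul_eq_smul hPS hTP,
    (Matrix.commute_kronecker_of_mul_eq_smul hTP hPS).symm,
    Matrix.commute_kronecker_of_mul_eq_smul hST hST⟩,
    ⟨fun h => hω2 (by simpa using (hcommute _ _ _ _).1 h),
      fun h => hω2 (by simpa using (hcommute _ _ _ _).1 h.symm),
      fun h => hω2 (by simpa using (hcommute _ _ _ _).1 h)⟩, ?_⟩
  rw [hproduct (-2) 0 1 1 1 (-1) (by norm_num) (by norm_num),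
    hproduct (-2) 0 1 (-1) 1 1 (by norm_num) (by norm_num),
    Matrix.smul_kronecker, Matrix.kronecker_smul, smul_smul, ← zpow_add₀ hω,
    Matrix.one_kronecker_one]
  norm_num

/-- The explicit (●,■) qudit Floquet code checks satisfy the three code
conditions. -/
theorem circle_square_code_conditions (D : ℕ) (hD : Nat.Prime D) (hD3 : 3 ≤ D)
    (G : Matrix (Fin D × Fin D) (Fin D × Fin D) ℂ)
    (hG : G = (Xmat D ^ (-2 : ℤ)) ⊗ₖ (Xmat D ^ (-2 : ℤ)))
    (R : Matrix (Fin D × Fin D) (Fin D × Fin D) ℂ)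
    (hR : R = (Xmat D * Zmat D) ⊗ₖ (Xmat D * Zmat D ^ (-1 : ℤ)))
    (B : Matrix (Fin D × Fin D) (Fin D × Fin D) ℂ)
    (hB : B = (Xmat D * Zmat D ^ (-1 : ℤ)) ⊗ₖ (Xmat D * Zmat D)) :
    (Commute G R ∧ Commute G B ∧ Commute R B) ∧
    (¬ Commute (Xmat D ^ (-2 : ℤ)) (Xmat D * Zmat D) ∧
     ¬ Commute (Xmat D ^ (-2 : ℤ)) (Xmat D * Zmat D ^ (-1 : ℤ)) ∧
     ¬ Commute (Xmat D * Zmat D) (Xmat D * Zmat D ^ (-1 : ℤ))) ∧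
    (Xmat D ^ (-2 : ℤ) * (Xmat D * Zmat D) * (Xmat D * Zmat D ^ (-1 : ℤ)))
      ⊗ₖ (Xmat D ^ (-2 : ℤ) * (Xmat D * Zmat D ^ (-1 : ℤ)) * (Xmat D * Zmat D)) = 1 :=
  circle_square_code_conditions_general D hD3 G hG R hR B hB
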